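/- A finite Gibbs process with Papangelou intensity κ^{(C,ψ)} exists if and only if Z_C(ψ) < ∞; moreover any such process has the explicit distribution Z_C(ψ)^{-1}(1{0∈·} + ∑_{m≥1}(1/m!)∫_{C^m}1{∑δ_{x_j}∈·} κ_m(·,ψ)dλ^m). In particular finite Gibbs processes are unique in distribution. -/

import Mathlib

/-!
With `ν = λ|_C` write `J_m(g) = ∫ g(δ_{x₁} + ⋯ + δ_{x_m}) κ_m(x₁, …, x_m, ψ) dν^m`
(`janossyLIntegral`). The cocycle identity makes `κ_m` symmetric, so peeling off one point gives
`J_{m+1}(μ ↦ ∫ f(x, μ) dμ(x)) = (m + 1) J_m(μ ↦ ∫ f(x, μ + δ_x) κ(x, ψ + μ) dν(x))`. Summed with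
weights `1/m!` this says that `Ξ = ∑_m J_m/m!` (`unnormalizedGibbs`) satisfies the GNZ equations;
its total mass is `Z_C(ψ)`.

Conversely, let `Q` be a finite Gibbs process and `N(μ) = μ(X)`. The GNZ equation with
`f(x, μ) = 1{N(μ) = m + 1} g(μ)` reads
`(m + 1) E[g; N = m + 1] = E[∫ g(· + δ_x) κ(x, ψ + ·) dν(x); N = m]`, so by induction
`E[g; N = m] = Q(N = 0) J_m(g)/m!`, i.e. `Q = Q(N = 0) Ξ`. Normalisation gives
`Q(N = 0) Z_C(ψ) = 1`, hence `Z_C(ψ) < ∞` and `Q = Ξ / Z_C(ψ)`.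
-/

open MeasureTheory ENNReal

attribute [local instance] Classical.propDecidable

namespace Gibbs

variable {X : Type*} [MeasurableSpace X]

noncomputable def diracSum (l : List X) : Measure X :=
  (l.map fun x => Measure.dirac x).sum

noncomputable def diracSumFin {m : ℕ} (v : Fin m → X) : Measure X :=
  ∑ i, Measure.dirac (v i)

noncomputable def kappaList (κ : X → Measure X → ℝ≥0∞) : List X → Measure X → ℝ≥0∞
  | [], _ => 1
  | x :: l, μ => κ x (μ + diracSum l) * kappaList κ l μ

noncomputable def kappaFin (κ : X → Measure X → ℝ≥0∞) {m : ℕ}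
    (v : Fin m → X) (μ : Measure X) : ℝ≥0∞ :=
  kappaList κ (List.ofFn v) μ

def Cocycle (κ : X → Measure X → ℝ≥0∞) : Prop :=
  ∀ (x y : X) (μ : Measure X),
    κ x μ * κ y (μ + Measure.dirac x) = κ y μ * κ x (μ + Measure.dirac y)

def IsLocalization (Bseq : ℕ → Set X) : Prop :=
  Monotone Bseq ∧ (∀ j, MeasurableSet (Bseq j)) ∧ (⋃ j, Bseq j) = Set.univ

def IsCounting (Bseq : ℕ → Set X) (μ : Measure X) : Prop :=
  ∀ j, ∃ n : ℕ, μ (Bseq j) = n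

structure IsFactorial (fact : Measure X → (m : ℕ) → Measure (Fin m → X)) : Prop where
  one : ∀ μ : Measure X, fact μ 1 = Measure.map (fun x => (fun _ : Fin 1 => x)) μ
  symm : ∀ (μ : Measure X) (m : ℕ) (σ : Equiv.Perm (Fin m)),
    Measure.map (fun v => v ∘ σ) (fact μ m) = fact μ m
  recur : ∀ (μ : Measure X) (m : ℕ) (A : Set (Fin (m + 1) → X)), MeasurableSet A →
    fact μ (m + 1) A =
      ∫⁻ v, (μ {x | Fin.snoc v x ∈ A}
        - ∑ j : Fin m, Set.indicator A (fun _ => (1 : ℝ≥0∞)) (Fin.snoc v (v j))) ∂ fact μ m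

noncomputable def enat (c : ℝ≥0∞) : ℕ := ⌊c.toReal⌋₊

noncomputable def elog (c : ℝ≥0∞) : EReal :=
  if c = 0 then ⊥ else if c = ⊤ then ⊤ else ((Real.log c.toReal : ℝ) : EReal)

noncomputable def eexp (x : EReal) : ℝ≥0∞ :=
  if x = ⊥ then 0 else if x = ⊤ then ⊤ else ENNReal.ofReal (Real.exp x.toReal)

noncomputable def hamiltonian (κ : X → Measure X → ℝ≥0∞)
    (fact : Measure X → (m : ℕ) → Measure (Fin m → X)) (μ ψ : Measure X) : EReal :=
  if μ Set.univ = 0 then 0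
  else if μ Set.univ = ⊤ then ⊤
  else - elog ((((enat (μ Set.univ)).factorial : ℝ≥0∞))⁻¹ *
    ∫⁻ v : Fin (enat (μ Set.univ)) → X, kappaFin κ v ψ ∂ fact μ (enat (μ Set.univ)))

noncomputable def partitionZ (κ : X → Measure X → ℝ≥0∞) (lam : Measure X)
    (B : Set X) (ψ : Measure X) : ℝ≥0∞ :=
  1 + ∑' m : ℕ, (((m + 1).factorial : ℝ≥0∞))⁻¹ *
    ∫⁻ v : Fin (m + 1) → X, kappaFin κ v ψ ∂(Measure.pi fun _ : Fin (m + 1) => lam.restrict B)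

noncomputable def kernelRestrict (κ : X → Measure X → ℝ≥0∞) (C : Set X) (ψ : Measure X) :
    X → Measure X → ℝ≥0∞ :=
  fun x μ => κ x (ψ + μ) * Set.indicator C (fun _ => (1 : ℝ≥0∞)) x

def IsGibbsLaw (κ' : X → Measure X → ℝ≥0∞) (lam : Measure X)
    (Q : Measure (Measure X)) : Prop :=
  ∀ f : X → Measure X → ℝ≥0∞,
    Measurable (fun p : X × Measure X => f p.1 p.2) →
    ∫⁻ μ, ∫⁻ x, f x μ ∂μ ∂Q
      = ∫⁻ μ, ∫⁻ x, f x (μ + Measure.dirac x) * κ' x μ ∂lam ∂Q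

lemma diracSum_ofFn {m : ℕ} (v : Fin m → X) : diracSum (List.ofFn v) = diracSumFin v := by
  simp [diracSum, diracSumFin, List.map_ofFn, List.sum_ofFn, Function.comp_def]

lemma diracSum_cons (x : X) (l : List X) : diracSum (x :: l) = diracSum l + Measure.dirac x := by
  simp [diracSum, add_comm]

lemma diracSumFin_cons {m : ℕ} (x : X) (v : Fin m → X) :
    diracSumFin (Fin.cons x v : Fin (m + 1) → X) = Measure.dirac x + diracSumFin v := by
  simp [diracSumFin, Fin.sum_univ_succ]

lemma diracSumFin_comp_perm {m : ℕ} (σ : Equiv.Perm (Fin m)) (v : Fin m → X) :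
    diracSumFin (v ∘ σ) = diracSumFin v :=
  Equiv.sum_comp σ fun i => Measure.dirac (v i)

lemma diracSumFin_apply {m : ℕ} (v : Fin m → X) {s : Set X} (hs : MeasurableSet s) :
    diracSumFin v s = (Finset.univ.filter fun i => v i ∈ s).card := by
  simp [diracSumFin, Measure.finsetSum_apply, Measure.dirac_apply' _ hs, Set.indicator_apply,
    Finset.sum_boole]

lemma diracSumFin_apply_univ {m : ℕ} (v : Fin m → X) : diracSumFin v Set.univ = m := by
  simp [diracSumFin_apply v MeasurableSet.univ]

lemma kappaFin_zero (κ : X → Measure X → ℝ≥0∞) (v : Fin 0 → X) (μ : Measure X) :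
    kappaFin κ v μ = 1 := rfl

lemma kappaFin_cons (κ : X → Measure X → ℝ≥0∞) {m : ℕ} (x : X) (v : Fin m → X)
    (μ : Measure X) :
    kappaFin κ (Fin.cons x v : Fin (m + 1) → X) μ = κ x (μ + diracSumFin v) * kappaFin κ v μ := by
  simp only [kappaFin, List.ofFn_succ, Fin.cons_zero, Fin.cons_succ, kappaList]
  rw [← diracSum_ofFn]

section Cocycle

variable {κ : X → Measure X → ℝ≥0∞} (hcoc : Cocycle κ)
include hcoc

lemma kappaList_perm {l l' : List X} (h : l.Perm l') (μ : Measure X) :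
    kappaList κ l μ = kappaList κ l' μ := by
  induction h with
  | nil => rfl
  | cons x h ih => simp only [kappaList, ih, diracSum, (h.map _).sum_eq]
  | swap x y l =>
    simp only [kappaList, diracSum_cons, ← add_assoc]
    rw [← mul_assoc, mul_comm (κ y _), hcoc]
    ring
  | trans _ _ ih₁ ih₂ => rw [ih₁, ih₂]

lemma kappaFin_comp_perm {m : ℕ} (σ : Equiv.Perm (Fin m)) (v : Fin m → X) (μ : Measure X) :
    kappaFin κ (v ∘ σ) μ = kappaFin κ v μ :=
  kappaList_perm hcoc (σ.ofFn_comp_perm v) μ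

end Cocycle

lemma measurable_diracSumFin {m : ℕ} : Measurable (diracSumFin : (Fin m → X) → Measure X) :=
  Finset.measurable_sum _ fun i _ => Measure.measurable_dirac.comp (measurable_pi_apply i)

lemma measurable_kappaFin {κ : X → Measure X → ℝ≥0∞}
    (hκ : Measurable fun p : X × Measure X => κ p.1 p.2) (ψ : Measure X) :
    ∀ {m : ℕ}, Measurable fun v : Fin m → X => kappaFin κ v ψ
  | 0 => measurable_const
  | m + 1 => by
    have h : (fun v : Fin (m + 1) → X => kappaFin κ v ψ) = fun v =>
        κ (v 0) (ψ + diracSumFin (Fin.tail v)) * kappaFin κ (Fin.tail v) ψ :=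
      funext fun v => by rw [← kappaFin_cons, Fin.cons_self_tail]
    have htail : Measurable (Fin.tail : (Fin (m + 1) → X) → Fin m → X) :=
      measurable_pi_lambda _ fun i => measurable_pi_apply i.succ
    rw [h]
    exact (hκ.comp ((measurable_pi_apply 0).prodMk (measurable_const.add
      (measurable_diracSumFin.comp htail)))).mul
      ((measurable_kappaFin hκ ψ).comp htail)

lemma measurableSet_measure_univ_eq (c : ℝ≥0∞) : MeasurableSet {μ : Measure X | μ Set.univ = c} :=
  Measure.measurable_coe MeasurableSet.univ (measurableSet_singleton c)

-- `μ ↦ μ` is not an s-finite kernel, but its restrictions to a fixed total mass are finite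
-- kernels, so their sum is s-finite and integrates measurably on measures of integer mass.
noncomputable def massKernel (n : ℕ) : ProbabilityTheory.Kernel (Measure X) X where
  toFun μ := if μ Set.univ = n then μ else 0
  measurable' := Measurable.ite (measurableSet_measure_univ_eq _) measurable_id measurable_const

instance (n : ℕ) : ProbabilityTheory.IsFiniteKernel (massKernel (X := X) n) :=
  ⟨⟨n, ENNReal.natCast_lt_top n, fun μ => by
    simp only [massKernel, ProbabilityTheory.Kernel.coe_mk]
    split_ifs with h <;> simp [h]⟩⟩

lemma sum_massKernel_apply {μ : Measure X} {n : ℕ} (h : μ Set.univ = n) :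
    ProbabilityTheory.Kernel.sum massKernel μ = μ := by
  ext s hs
  simp [ProbabilityTheory.Kernel.sum_apply' _ _ hs, massKernel, h, apply_ite (DFunLike.coe · s)]

lemma exists_measurable_eq_lintegral_self {f : X → Measure X → ℝ≥0∞}
    (hf : Measurable fun p : X × Measure X => f p.1 p.2) :
    ∃ g : Measure X → ℝ≥0∞, Measurable g ∧
      ∀ (μ : Measure X) (n : ℕ), μ Set.univ = n → g μ = ∫⁻ x, f x μ ∂μ :=
  ⟨fun μ => ∫⁻ x, f x μ ∂ProbabilityTheory.Kernel.sum massKernel μ,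
    Measurable.lintegral_kernel_prod_right (hf.comp measurable_swap),
    fun μ n h => by dsimp only; rw [sum_massKernel_apply h]⟩

lemma measurable_lintegral_add_dirac_mul {κ : X → Measure X → ℝ≥0∞}
    (hκ : Measurable fun p : X × Measure X => κ p.1 p.2) (ψ ν : Measure X) [SFinite ν]
    {F : X → Measure X → ℝ≥0∞} (hF : Measurable fun p : X × Measure X => F p.1 p.2) :
    Measurable fun μ => ∫⁻ x, F x (μ + Measure.dirac x) * κ x (ψ + μ) ∂ν :=
  Measurable.lintegral_prod_right' ((hF.comp (measurable_snd.prodMk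
    (measurable_fst.add (Measure.measurable_dirac.comp measurable_snd)))).mul
    (hκ.comp (measurable_snd.prodMk (measurable_const.add measurable_fst))))

lemma lintegral_pi_succ {ν : Measure X} [SigmaFinite ν] {m : ℕ}
    {g : (Fin (m + 1) → X) → ℝ≥0∞} (hg : Measurable g) :
    ∫⁻ v, g v ∂Measure.pi (fun _ => ν) =
      ∫⁻ w, ∫⁻ x, g (Fin.cons x w) ∂ν ∂Measure.pi (fun _ => ν) := by
  have hmp := (measurePreserving_piFinSuccAbove (fun _ : Fin (m + 1) => ν) 0).symm
  rw [← hmp.lintegral_comp hg]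
  exact (lintegral_prod_symm' _ (hg.comp hmp.measurable)).trans
    (by simp [MeasurableEquiv.piFinSuccAbove_symm_apply, Fin.insertNthEquiv, Fin.insertNth_zero'])

lemma _root_.ENNReal.inv_factorial_succ (m : ℕ) :
    (((m + 1).factorial : ℕ) : ℝ≥0∞)⁻¹ = ((m : ℝ≥0∞) + 1)⁻¹ * ((m.factorial : ℕ) : ℝ≥0∞)⁻¹ := by
  rw [Nat.factorial_succ, Nat.cast_mul, ENNReal.mul_inv (by simp) (by simp)]
  push_cast
  rfl

section Janossy

variable (κ : X → Measure X → ℝ≥0∞) (ψ ν : Measure X)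

noncomputable def janossyLIntegral (g : Measure X → ℝ≥0∞) (m : ℕ) : ℝ≥0∞ :=
  ∫⁻ v : Fin m → X, g (diracSumFin v) * kappaFin κ v ψ ∂Measure.pi fun _ => ν

lemma janossyLIntegral_zero (g : Measure X → ℝ≥0∞) : janossyLIntegral κ ψ ν g 0 = g 0 := by
  rw [janossyLIntegral, Measure.pi_of_empty, lintegral_dirac' _ Subsingleton.measurable]
  simp [diracSumFin, kappaFin_zero]

variable {κ ψ ν} [SigmaFinite ν]

lemma lintegral_head_mul_kappaFin (hκ : Measurable fun p : X × Measure X => κ p.1 p.2) {m : ℕ}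
    {F : X → Measure X → ℝ≥0∞} (hF : Measurable fun p : X × Measure X => F p.1 p.2) :
    ∫⁻ v : Fin (m + 1) → X, F (v 0) (diracSumFin v) * kappaFin κ v ψ ∂Measure.pi (fun _ => ν) =
      janossyLIntegral κ ψ ν (fun μ => ∫⁻ x, F x (μ + Measure.dirac x) * κ x (ψ + μ) ∂ν) m := by
  rw [lintegral_pi_succ (g := fun v => F (v 0) (diracSumFin v) * kappaFin κ v ψ)
    ((hF.comp ((measurable_pi_apply 0).prodMk measurable_diracSumFin)).mul
      (measurable_kappaFin hκ ψ))]
  refine lintegral_congr fun w => ?_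
  simp only [Fin.cons_zero, diracSumFin_cons, kappaFin_cons, add_comm (Measure.dirac _),
    ← mul_assoc]
  exact lintegral_mul_const _ ((hF.comp (measurable_id.prodMk (measurable_const.add
    Measure.measurable_dirac))).mul (hκ.comp (measurable_id.prodMk measurable_const)))

lemma lintegral_sum_mul_kappaFin (hκ : Measurable fun p : X × Measure X => κ p.1 p.2)
    (hcoc : Cocycle κ) {m : ℕ} {F : X → Measure X → ℝ≥0∞}
    (hF : Measurable fun p : X × Measure X => F p.1 p.2) :
    ∫⁻ v : Fin (m + 1) → X, (∑ i, F (v i) (diracSumFin v)) * kappaFin κ v ψ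
        ∂Measure.pi (fun _ => ν) =
      (m + 1) * ∫⁻ v : Fin (m + 1) → X, F (v 0) (diracSumFin v) * kappaFin κ v ψ
        ∂Measure.pi (fun _ => ν) := by
  have hterm (i : Fin (m + 1)) : Measurable fun v : Fin (m + 1) → X =>
      F (v i) (diracSumFin v) * kappaFin κ v ψ :=
    (hF.comp ((measurable_pi_apply i).prodMk measurable_diracSumFin)).mul
      (measurable_kappaFin hκ ψ)
  have hswap (i : Fin (m + 1)) :
      ∫⁻ v : Fin (m + 1) → X, F (v i) (diracSumFin v) * kappaFin κ v ψ ∂Measure.pi (fun _ => ν) =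
        ∫⁻ v : Fin (m + 1) → X, F (v 0) (diracSumFin v) * kappaFin κ v ψ
          ∂Measure.pi (fun _ => ν) := by
    have hmp := measurePreserving_piCongrLeft (fun _ : Fin (m + 1) => ν) (Equiv.swap i 0)
    rw [← hmp.lintegral_comp (hterm 0)]
    refine lintegral_congr fun v => ?_
    have hv : MeasurableEquiv.piCongrLeft (fun _ => X) (Equiv.swap i 0) v =
        v ∘ Equiv.swap i 0 := by
      ext j
      simp [MeasurableEquiv.coe_piCongrLeft, Equiv.piCongrLeft_apply_eq_cast]
    rw [hv, diracSumFin_comp_perm, kappaFin_comp_perm hcoc]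
    simp
  simp_rw [Finset.sum_mul]
  rw [lintegral_finsetSum _ fun i _ => hterm i]
  simp [hswap]

lemma janossyLIntegral_succ (hκ : Measurable fun p : X × Measure X => κ p.1 p.2)
    {g : Measure X → ℝ≥0∞} (hg : Measurable g) (m : ℕ) :
    janossyLIntegral κ ψ ν g (m + 1) =
      janossyLIntegral κ ψ ν (fun μ => ∫⁻ x, g (μ + Measure.dirac x) * κ x (ψ + μ) ∂ν) m :=
  lintegral_head_mul_kappaFin hκ (F := fun _ μ => g μ) (hg.comp measurable_snd)

lemma janossyLIntegral_lintegral_self_succ (hκ : Measurable fun p : X × Measure X => κ p.1 p.2)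
    (hcoc : Cocycle κ) {f : X → Measure X → ℝ≥0∞}
    (hf : Measurable fun p : X × Measure X => f p.1 p.2) (m : ℕ) :
    janossyLIntegral κ ψ ν (fun μ => ∫⁻ x, f x μ ∂μ) (m + 1) =
      (m + 1) * janossyLIntegral κ ψ ν
        (fun μ => ∫⁻ x, f x (μ + Measure.dirac x) * κ x (ψ + μ) ∂ν) m := by
  have hself (v : Fin (m + 1) → X) :
      ∫⁻ x, f x (diracSumFin v) ∂diracSumFin v = ∑ i, f (v i) (diracSumFin v) := by
    rw [diracSumFin, lintegral_finsetSum_measure]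
    exact Finset.sum_congr rfl fun i _ =>
      lintegral_dirac' _ (hf.comp (measurable_id.prodMk measurable_const))
  simp only [janossyLIntegral, hself]
  rw [lintegral_sum_mul_kappaFin hκ hcoc hf, lintegral_head_mul_kappaFin hκ hf]
  rfl

end Janossy

section UnnormalizedGibbs

variable (κ : X → Measure X → ℝ≥0∞) (ψ ν : Measure X)

noncomputable def unnormalizedGibbs : Measure (Measure X) :=
  Measure.sum fun m : ℕ => ((m.factorial : ℝ≥0∞))⁻¹ •
    ((Measure.pi fun _ : Fin m => ν).withDensity fun v => kappaFin κ v ψ).map diracSumFin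

variable {κ ψ ν}

lemma lintegral_unnormalizedGibbs (hκ : Measurable fun p : X × Measure X => κ p.1 p.2)
    {g : Measure X → ℝ≥0∞} (hg : Measurable g) :
    ∫⁻ μ, g μ ∂unnormalizedGibbs κ ψ ν =
      ∑' m : ℕ, ((m.factorial : ℝ≥0∞))⁻¹ * janossyLIntegral κ ψ ν g m := by
  simp only [unnormalizedGibbs, lintegral_sum_measure, lintegral_smul_measure, smul_eq_mul,
    lintegral_map hg measurable_diracSumFin, janossyLIntegral]
  refine tsum_congr fun m => ?_
  rw [lintegral_withDensity_eq_lintegral_mul _ (measurable_kappaFin hκ ψ)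
    (g := fun v => g (diracSumFin v)) (hg.comp measurable_diracSumFin)]
  simp only [Pi.mul_apply, mul_comm (kappaFin κ _ ψ)]

lemma ae_unnormalizedGibbs {p : Measure X → Prop} (hp : MeasurableSet {μ | p μ})
    (h : ∀ (m : ℕ) (v : Fin m → X), p (diracSumFin v)) : ∀ᵐ μ ∂unnormalizedGibbs κ ψ ν, p μ :=
  Measure.ae_sum_iff.2 fun m => Measure.ae_smul_measure
    ((ae_map_iff measurable_diracSumFin.aemeasurable hp).2 (ae_of_all _ (h m))) _

lemma unnormalizedGibbs_apply (hκ : Measurable fun p : X × Measure X => κ p.1 p.2)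
    {A : Set (Measure X)} (hA : MeasurableSet A) :
    unnormalizedGibbs κ ψ ν A =
      Set.indicator A (fun _ => (1 : ℝ≥0∞)) (0 : Measure X)
        + ∑' m : ℕ, (((m + 1).factorial : ℝ≥0∞))⁻¹ *
            ∫⁻ v : Fin (m + 1) → X,
              Set.indicator A (fun _ => (1 : ℝ≥0∞)) (diracSumFin v) * kappaFin κ v ψ
            ∂(Measure.pi fun _ : Fin (m + 1) => ν) := by
  rw [← one_mul (unnormalizedGibbs κ ψ ν A), ← lintegral_indicator_const hA,
    lintegral_unnormalizedGibbs hκ (measurable_const.indicator hA),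
    tsum_eq_zero_add' ENNReal.summable, janossyLIntegral_zero]
  simp only [Nat.factorial_zero, Nat.cast_one, inv_one, one_mul]
  rfl

variable [SigmaFinite ν]

lemma isGibbsLaw_unnormalizedGibbs (hκ : Measurable fun p : X × Measure X => κ p.1 p.2)
    (hcoc : Cocycle κ) : IsGibbsLaw (fun x μ => κ x (ψ + μ)) ν (unnormalizedGibbs κ ψ ν) := by
  intro f hf
  obtain ⟨g, hg, hgf⟩ := exists_measurable_eq_lintegral_self hf
  have hae : (fun μ => ∫⁻ x, f x μ ∂μ) =ᵐ[unnormalizedGibbs κ ψ ν] g :=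
    (ae_unnormalizedGibbs (p := fun μ => ∃ n : ℕ, μ Set.univ = n)
      (by simpa only [Set.ofPred_exists] using
        MeasurableSet.iUnion fun n : ℕ => measurableSet_measure_univ_eq (n : ℝ≥0∞))
      fun m v => ⟨m, diracSumFin_apply_univ v⟩).mono fun μ ⟨n, hn⟩ => (hgf μ n hn).symm
  have hJ (m : ℕ) : janossyLIntegral κ ψ ν g m =
      janossyLIntegral κ ψ ν (fun μ => ∫⁻ x, f x μ ∂μ) m :=
    lintegral_congr fun v => by rw [hgf _ m (diracSumFin_apply_univ v)]
  rw [lintegral_congr_ae hae, lintegral_unnormalizedGibbs hκ hg,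
    lintegral_unnormalizedGibbs hκ (measurable_lintegral_add_dirac_mul hκ ψ ν hf),
    tsum_eq_zero_add' ENNReal.summable]
  simp only [hJ, janossyLIntegral_zero, lintegral_zero_measure,
    janossyLIntegral_lintegral_self_succ hκ hcoc hf, ENNReal.inv_factorial_succ, mul_zero,
    zero_add]
  refine tsum_congr fun m => ?_
  rw [mul_comm ((m : ℝ≥0∞) + 1)⁻¹, mul_assoc, ENNReal.inv_mul_cancel_left (by simp) (by simp)]

end UnnormalizedGibbs

lemma lintegral_indicator_measure_univ_eq (g : Measure X → ℝ≥0∞) (n : ℕ) (μ : Measure X) :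
    ∫⁻ _, {ν : Measure X | ν Set.univ = n}.indicator g μ ∂μ =
      {ν : Measure X | ν Set.univ = n}.indicator (fun ν => n * g ν) μ := by
  rw [lintegral_const]
  by_cases h : μ Set.univ = n
  · simp [h, mul_comm]
  · simp [h]

lemma indicator_measure_univ_add_dirac (g : Measure X → ℝ≥0∞) (m : ℕ) (μ : Measure X) (x : X) :
    {ν : Measure X | ν Set.univ = (m + 1 : ℕ)}.indicator g (μ + Measure.dirac x) =
      {ν : Measure X | ν Set.univ = m}.indicator (fun ν => g (ν + Measure.dirac x)) μ := by
  have h : (μ + Measure.dirac x) Set.univ = (m + 1 : ℕ) ↔ μ Set.univ = m := by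
    rw [Measure.add_apply, Measure.dirac_apply_of_mem (Set.mem_univ x), Nat.cast_succ,
      ENNReal.add_left_inj ENNReal.one_ne_top]
  simp only [Set.indicator_apply, Set.mem_ofPred_eq, h]

section Uniqueness

variable {κ : X → Measure X → ℝ≥0∞} {ψ ν : Measure X} {Q : Measure (Measure X)}

lemma IsGibbsLaw.mul_setLIntegral_measure_univ_succ
    (hG : IsGibbsLaw (fun x μ => κ x (ψ + μ)) ν Q) (m : ℕ) {g : Measure X → ℝ≥0∞}
    (hg : Measurable g) :
    (m + 1) * ∫⁻ μ in {μ | μ Set.univ = (m + 1 : ℕ)}, g μ ∂Q =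
      ∫⁻ μ in {μ | μ Set.univ = m}, ∫⁻ x, g (μ + Measure.dirac x) * κ x (ψ + μ) ∂ν ∂Q := by
  have hS (n : ℕ) := measurableSet_measure_univ_eq (X := X) (n : ℝ≥0∞)
  have hgnz := hG (fun _ μ => {μ : Measure X | μ Set.univ = (m + 1 : ℕ)}.indicator g μ)
    ((hg.indicator (hS _)).comp measurable_snd)
  have hR (μ : Measure X) :
      ∫⁻ x, {ν : Measure X | ν Set.univ = m}.indicator (fun ν => g (ν + Measure.dirac x)) μ
          * κ x (ψ + μ) ∂ν =
        {ν : Measure X | ν Set.univ = m}.indicator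
          (fun μ => ∫⁻ x, g (μ + Measure.dirac x) * κ x (ψ + μ) ∂ν) μ := by
    by_cases h : μ Set.univ = m <;> simp [h]
  simp only [lintegral_indicator_measure_univ_eq, indicator_measure_univ_add_dirac, hR] at hgnz
  rw [lintegral_indicator (hS _), lintegral_indicator (hS _), lintegral_const_mul _ hg] at hgnz
  push_cast at hgnz ⊢
  exact hgnz

variable [SigmaFinite ν]

lemma IsGibbsLaw.setLIntegral_measure_univ_eq (hκ : Measurable fun p : X × Measure X => κ p.1 p.2)
    (hG : IsGibbsLaw (fun x μ => κ x (ψ + μ)) ν Q) (m : ℕ) {g : Measure X → ℝ≥0∞}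
    (hg : Measurable g) :
    ∫⁻ μ in {μ | μ Set.univ = m}, g μ ∂Q =
      Q {μ | μ Set.univ = 0} * ((m.factorial : ℝ≥0∞))⁻¹ * janossyLIntegral κ ψ ν g m := by
  induction m generalizing g with
  | zero =>
    have h0 : ∀ μ ∈ {μ : Measure X | μ Set.univ = (0 : ℕ)}, g μ = g 0 :=
      fun μ hμ => by rw [Measure.measure_univ_eq_zero (μ := μ) |>.1 (by simpa using hμ)]
    rw [setLIntegral_congr_fun (measurableSet_measure_univ_eq _) h0, setLIntegral_const,
      janossyLIntegral_zero]
    simp [mul_comm]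
  | succ m ih =>
    have hstep := hG.mul_setLIntegral_measure_univ_succ m hg
    rw [ih (measurable_lintegral_add_dirac_mul hκ ψ ν (F := fun _ μ => g μ)
      (hg.comp measurable_snd)), ← janossyLIntegral_succ hκ hg] at hstep
    rw [← ENNReal.inv_mul_cancel_left (a := (m : ℝ≥0∞) + 1)
      (b := ∫⁻ μ in {μ | μ Set.univ = (m + 1 : ℕ)}, g μ ∂Q) (by simp) (by simp), hstep,
      ENNReal.inv_factorial_succ]
    ring

lemma IsGibbsLaw.eq_smul_unnormalizedGibbs (hκ : Measurable fun p : X × Measure X => κ p.1 p.2)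
    (hG : IsGibbsLaw (fun x μ => κ x (ψ + μ)) ν Q)
    (hnat : ∀ᵐ μ ∂Q, ∃ n : ℕ, μ Set.univ = (n : ℝ≥0∞)) :
    Q = Q {μ | μ Set.univ = 0} • unnormalizedGibbs κ ψ ν := by
  ext A hA
  have hS (n : ℕ) := measurableSet_measure_univ_eq (X := X) (n : ℝ≥0∞)
  have hdisj :
      Pairwise (Function.onFun Disjoint fun n : ℕ => A ∩ {μ : Measure X | μ Set.univ = n}) :=
    fun i j hij => Set.disjoint_left.2 fun μ hi hj =>
      hij (Nat.cast_injective (hi.2.symm.trans hj.2))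
  have hsplit : Q A = ∑' n : ℕ, Q (A ∩ {μ | μ Set.univ = n}) := by
    rw [← measure_iUnion hdisj fun n => hA.inter (hS n), ← Set.inter_iUnion,
      measure_inter_conull]
    simpa [ae_iff, Set.compl_iUnion, Set.compl_ofPred, Set.iInter_ofPred] using hnat
  rw [hsplit, Measure.smul_apply, smul_eq_mul, ← one_mul (unnormalizedGibbs κ ψ ν A),
    ← lintegral_indicator_const hA, lintegral_unnormalizedGibbs hκ
      (measurable_const.indicator hA), ← ENNReal.tsum_mul_left]
  refine tsum_congr fun n => ?_
  rw [← mul_assoc, ← hG.setLIntegral_measure_univ_eq hκ n (measurable_const.indicator hA),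
    lintegral_indicator_const hA, one_mul, Measure.restrict_apply hA]

end Uniqueness

lemma IsGibbsLaw.smul {κ' : X → Measure X → ℝ≥0∞} {lam : Measure X} {Q : Measure (Measure X)}
    (hG : IsGibbsLaw κ' lam Q) (c : ℝ≥0∞) : IsGibbsLaw κ' lam (c • Q) := fun f hf => by
  simp only [lintegral_smul_measure, hG f hf]

lemma isGibbsLaw_kernelRestrict_iff {κ : X → Measure X → ℝ≥0∞} {lam : Measure X} {C : Set X}
    (hC : MeasurableSet C) (ψ : Measure X) (Q : Measure (Measure X)) :
    IsGibbsLaw (kernelRestrict κ C ψ) lam Q ↔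
      IsGibbsLaw (fun x μ => κ x (ψ + μ)) (lam.restrict C) Q := by
  have h (f : X → Measure X → ℝ≥0∞) (μ : Measure X) :
      ∫⁻ x, f x (μ + Measure.dirac x) * kernelRestrict κ C ψ x μ ∂lam =
        ∫⁻ x, f x (μ + Measure.dirac x) * κ x (ψ + μ) ∂lam.restrict C := by
    rw [← lintegral_indicator hC]
    congr 1 with x
    by_cases hx : x ∈ C <;> simp [kernelRestrict, hx]
  simp only [IsGibbsLaw, h]

lemma unnormalizedGibbs_univ {κ : X → Measure X → ℝ≥0∞}
    (hκ : Measurable fun p : X × Measure X => κ p.1 p.2) (lam : Measure X) (C : Set X)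
    (ψ : Measure X) : unnormalizedGibbs κ ψ (lam.restrict C) Set.univ = partitionZ κ lam C ψ := by
  simp [unnormalizedGibbs_apply hκ MeasurableSet.univ, partitionZ]

lemma measurableSet_isCounting {Bseq : ℕ → Set X} (hB : ∀ j, MeasurableSet (Bseq j)) :
    MeasurableSet {μ : Measure X | IsCounting Bseq μ} := by
  simp only [IsCounting, Set.ofPred_forall, Set.ofPred_exists]
  exact .iInter fun j => .iUnion fun n =>
    Measure.measurable_coe (hB j) (measurableSet_singleton _)

lemma isCounting_diracSumFin {Bseq : ℕ → Set X} (hB : ∀ j, MeasurableSet (Bseq j)) {m : ℕ}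
    (v : Fin m → X) : IsCounting Bseq (diracSumFin v) :=
  fun j => ⟨_, diracSumFin_apply v (hB j)⟩

lemma IsCounting.exists_measure_univ_eq {Bseq : ℕ → Set X} (hloc : IsLocalization Bseq)
    {μ : Measure X} (hμ : IsCounting Bseq μ) (hfin : μ Set.univ < ⊤) :
    ∃ n : ℕ, μ Set.univ = n := by
  choose n hn using hμ
  have hle (j : ℕ) : (n j : ℝ≥0∞) ≤ μ Set.univ := hn j ▸ measure_mono (Set.subset_univ _)
  obtain ⟨N, hN⟩ := ENNReal.exists_nat_gt hfin.ne
  have hbdd : BddAbove (Set.range n) :=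
    ⟨N, Set.forall_mem_range.2 fun j => Nat.cast_le.1 ((hle j).trans hN.le)⟩
  obtain ⟨j₀, hj₀⟩ := Nat.sSup_mem (Set.range_nonempty n) hbdd
  refine ⟨n j₀, le_antisymm ?_ (hle j₀)⟩
  rw [← hloc.2.2, hloc.1.measure_iUnion]
  exact iSup_le fun j => hn j ▸ Nat.cast_le.2 (hj₀ ▸ le_csSup hbdd ⟨j, rfl⟩)

lemma ne_top_and_eq_inv_smul_of_eq_smul {α : Type*} [MeasurableSpace α] {Q U : Measure α}
    [IsProbabilityMeasure Q] {c : ℝ≥0∞} (h : Q = c • U) :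
    U Set.univ ≠ ⊤ ∧ Q = (U Set.univ)⁻¹ • U := by
  have h1 : c * U Set.univ = 1 := by rw [← smul_eq_mul, ← Measure.smul_apply, ← h, measure_univ]
  refine ⟨fun htop => ?_, ENNReal.eq_inv_of_mul_eq_one_left h1 ▸ h⟩
  rw [htop, ENNReal.mul_top (left_ne_zero_of_mul_eq_one h1)] at h1
  exact ENNReal.top_ne_one h1

noncomputable def gibbsLaw (κ : X → Measure X → ℝ≥0∞) (lam : Measure X) (C : Set X)
    (ψ : Measure X) : Measure (Measure X) :=
  (partitionZ κ lam C ψ)⁻¹ • unnormalizedGibbs κ ψ (lam.restrict C)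

section GibbsLaw

variable {κ : X → Measure X → ℝ≥0∞} (hκ : Measurable fun p : X × Measure X => κ p.1 p.2)
  {lam : Measure X} {C : Set X} {ψ : Measure X}
include hκ

lemma gibbsLaw_apply {A : Set (Measure X)} (hA : MeasurableSet A) :
    gibbsLaw κ lam C ψ A = (partitionZ κ lam C ψ)⁻¹ *
      (Set.indicator A (fun _ => (1 : ℝ≥0∞)) (0 : Measure X)
        + ∑' m : ℕ, (((m + 1).factorial : ℝ≥0∞))⁻¹ *
            ∫⁻ v : Fin (m + 1) → X,
              Set.indicator A (fun _ => (1 : ℝ≥0∞)) (diracSumFin v) * kappaFin κ v ψ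
            ∂(Measure.pi fun _ : Fin (m + 1) => lam.restrict C)) := by
  rw [gibbsLaw, Measure.smul_apply, smul_eq_mul, unnormalizedGibbs_apply hκ hA]

lemma isProbabilityMeasure_gibbsLaw (hZ : partitionZ κ lam C ψ ≠ ⊤) :
    IsProbabilityMeasure (gibbsLaw κ lam C ψ) := by
  have hZ0 : partitionZ κ lam C ψ ≠ 0 := (zero_lt_one.trans_le le_self_add).ne'
  exact ⟨by rw [gibbsLaw, Measure.smul_apply, unnormalizedGibbs_univ hκ, smul_eq_mul,
    ENNReal.inv_mul_cancel hZ0 hZ]⟩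

variable [SigmaFinite lam] (hC : MeasurableSet C)
include hC

lemma isGibbsLaw_gibbsLaw (hcoc : Cocycle κ) :
    IsGibbsLaw (kernelRestrict κ C ψ) lam (gibbsLaw κ lam C ψ) :=
  (isGibbsLaw_kernelRestrict_iff hC ψ _).2 ((isGibbsLaw_unnormalizedGibbs hκ hcoc).smul _)

lemma IsGibbsLaw.partitionZ_ne_top_and_eq_gibbsLaw {Bseq : ℕ → Set X}
    (hloc : IsLocalization Bseq) {Q : Measure (Measure X)} [IsProbabilityMeasure Q]
    (hG : IsGibbsLaw (kernelRestrict κ C ψ) lam Q)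
    (hfin : ∀ᵐ μ ∂Q, IsCounting Bseq μ ∧ μ Set.univ < ⊤) :
    partitionZ κ lam C ψ ≠ ⊤ ∧ Q = gibbsLaw κ lam C ψ := by
  have hQU := ((isGibbsLaw_kernelRestrict_iff hC ψ Q).1 hG).eq_smul_unnormalizedGibbs hκ
    (hfin.mono fun μ h => h.1.exists_measure_univ_eq hloc h.2)
  rw [gibbsLaw, ← unnormalizedGibbs_univ hκ lam C ψ]
  exact ne_top_and_eq_inv_smul_of_eq_smul hQU

end GibbsLaw

lemma ae_gibbsLaw {κ : X → Measure X → ℝ≥0∞} {lam : Measure X} {C : Set X} {ψ : Measure X}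
    {Bseq : ℕ → Set X} (hB : ∀ j, MeasurableSet (Bseq j)) :
    ∀ᵐ μ ∂gibbsLaw κ lam C ψ, IsCounting Bseq μ ∧ μ Set.univ < ⊤ :=
  Measure.ae_smul_measure (ae_unnormalizedGibbs
    ((measurableSet_isCounting hB).inter
      (measurableSet_lt (Measure.measurable_coe .univ) measurable_const))
    fun m v => ⟨isCounting_diracSumFin hB v,
      (diracSumFin_apply_univ v).trans_lt (ENNReal.natCast_lt_top m)⟩) _

theorem finite_Gibbs_existence_iff_partitionZ_finite_general
    (Bseq : ℕ → Set X) (hloc : IsLocalization Bseq)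
    (lam : Measure X) (hlam : ∀ j, lam (Bseq j) ≠ ⊤)
    (κ : X → Measure X → ℝ≥0∞)
    (hκmeas : Measurable fun p : X × Measure X => κ p.1 p.2)
    (hcoc : Cocycle κ)
    (C : Set X) (hC : MeasurableSet C)
    (ψ : Measure X) :
    ((∃ Q : Measure (Measure X), IsProbabilityMeasure Q ∧
        IsGibbsLaw (kernelRestrict κ C ψ) lam Q ∧
        (∀ᵐ μ ∂Q, IsCounting Bseq μ ∧ μ Set.univ < ⊤))
      ↔ partitionZ κ lam C ψ < ⊤) ∧
    (∀ Q : Measure (Measure X), IsProbabilityMeasure Q →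
      IsGibbsLaw (kernelRestrict κ C ψ) lam Q →
      (∀ᵐ μ ∂Q, IsCounting Bseq μ ∧ μ Set.univ < ⊤) →
      ∀ A : Set (Measure X), MeasurableSet A →
        Q A = (partitionZ κ lam C ψ)⁻¹ *
          (Set.indicator A (fun _ => (1 : ℝ≥0∞)) (0 : Measure X)
            + ∑' m : ℕ, (((m + 1).factorial : ℝ≥0∞))⁻¹ *
                ∫⁻ v : Fin (m + 1) → X,
                  Set.indicator A (fun _ => (1 : ℝ≥0∞)) (diracSumFin v) * kappaFin κ v ψ
                ∂(Measure.pi fun _ : Fin (m + 1) => lam.restrict C))) := by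
  have : SigmaFinite lam := ⟨⟨⟨Bseq, fun _ => trivial, fun j => (hlam j).lt_top, hloc.2.2⟩⟩⟩
  refine ⟨⟨fun ⟨Q, _, hG, hfin⟩ =>
      (hG.partitionZ_ne_top_and_eq_gibbsLaw hκmeas hC hloc hfin).1.lt_top,
    fun hZ => ⟨gibbsLaw κ lam C ψ, isProbabilityMeasure_gibbsLaw hκmeas hZ.ne,
      isGibbsLaw_gibbsLaw hκmeas hC hcoc, ae_gibbsLaw hloc.2.1⟩⟩,
    fun Q _ hG hfin A hA => ?_⟩
  rw [(hG.partitionZ_ne_top_and_eq_gibbsLaw hκmeas hC hloc hfin).2, gibbsLaw_apply hκmeas hA]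

theorem finite_Gibbs_existence_iff_partitionZ_finite
    (Bseq : ℕ → Set X) (hloc : IsLocalization Bseq)
    (lam : Measure X) (hlam : ∀ j, lam (Bseq j) ≠ ⊤)
    (κ : X → Measure X → ℝ≥0∞)
    (hκmeas : Measurable fun p : X × Measure X => κ p.1 p.2)
    (hκfin : ∀ (x : X) (μ : Measure X), κ x μ ≠ ⊤)
    (hcoc : Cocycle κ)
    (C : Set X) (hC : MeasurableSet C)
    (ψ : Measure X) (hψ : IsCounting Bseq ψ) :
    ((∃ Q : Measure (Measure X), IsProbabilityMeasure Q ∧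
        IsGibbsLaw (kernelRestrict κ C ψ) lam Q ∧
        (∀ᵐ μ ∂Q, IsCounting Bseq μ ∧ μ Set.univ < ⊤))
      ↔ partitionZ κ lam C ψ < ⊤) ∧
    (∀ Q : Measure (Measure X), IsProbabilityMeasure Q →
      IsGibbsLaw (kernelRestrict κ C ψ) lam Q →
      (∀ᵐ μ ∂Q, IsCounting Bseq μ ∧ μ Set.univ < ⊤) →
      ∀ A : Set (Measure X), MeasurableSet A →
        Q A = (partitionZ κ lam C ψ)⁻¹ *
          (Set.indicator A (fun _ => (1 : ℝ≥0∞)) (0 : Measure X)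
            + ∑' m : ℕ, (((m + 1).factorial : ℝ≥0∞))⁻¹ *
                ∫⁻ v : Fin (m + 1) → X,
                  Set.indicator A (fun _ => (1 : ℝ≥0∞)) (diracSumFin v) * kappaFin κ v ψ
                ∂(Measure.pi fun _ : Fin (m + 1) => lam.restrict C))) :=
  finite_Gibbs_existence_iff_partitionZ_finite_general Bseq hloc lam hlam κ hκmeas hcoc C hC ψ

end Gibbs
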